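/- Let n ≥ 1 and let a₀ = 0 and a₁, …, a_n be real numbers. Then ∑_{i=1}^{n} a_i² ≤ (n(n+1)/2) · ∑_{l=1}^{n} (a_l - a_{l-1})². -/
import Mathlib

theorem tel_aux (a : ℕ → ℝ) (ha0 : a 0 = 0) :
    ∀ i, ∑ l ∈ Finset.Icc 1 i, (a l - a (l - 1)) = a i := by
  intro i
  induction i with
  | zero => simp [ha0]
  | succ i ih =>
    rw [show Finset.Icc 1 (i+1) = insert (i+1) (Finset.Icc 1 i) by
      ext x; simp [Finset.mem_Icc]; omega]
    rw [Finset.sum_insert (by simp)]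
    simp [ih]

theorem gauss_aux : ∀ n : ℕ, ∑ i ∈ Finset.Icc 1 n, (i : ℝ) = n * (n + 1) / 2 := by
  intro n
  induction n with
  | zero => simp
  | succ n ih =>
    rw [show Finset.Icc 1 (n+1) = insert (n+1) (Finset.Icc 1 n) by
      ext x; simp [Finset.mem_Icc]; omega]
    rw [Finset.sum_insert (by simp), ih]
    push_cast
    ring

/-- discrete Friedrichs-type inequality for a finite sequence with a₀ = 0. -/
theorem stmt_8 (n : ℕ) (hn : 1 ≤ n) (a : ℕ → ℝ) (ha0 : a 0 = 0) :
    ∑ i ∈ Finset.Icc 1 n, (a i) ^ 2 ≤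
      (n * (n + 1) / 2 : ℝ) * ∑ l ∈ Finset.Icc 1 n, (a l - a (l - 1)) ^ 2 := by
  set S := ∑ l ∈ Finset.Icc 1 n, (a l - a (l - 1)) ^ 2 with hS
  have hSnn : 0 ≤ S := Finset.sum_nonneg fun _ _ => sq_nonneg _
  have key : ∀ i ∈ Finset.Icc 1 n, (a i) ^ 2 ≤ (i : ℝ) * S := by
    intro i hi
    simp only [Finset.mem_Icc] at hi
    have h1 : (a i) ^ 2 = (∑ l ∈ Finset.Icc 1 i, (1 : ℝ) * (a l - a (l - 1))) ^ 2 := by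
      rw [← tel_aux a ha0 i]; simp
    rw [h1]
    calc (∑ l ∈ Finset.Icc 1 i, (1 : ℝ) * (a l - a (l - 1))) ^ 2
        ≤ (∑ l ∈ Finset.Icc 1 i, (1:ℝ)^2) * ∑ l ∈ Finset.Icc 1 i, (a l - a (l-1))^2 :=
          Finset.sum_mul_sq_le_sq_mul_sq _ _ _
      _ ≤ (i : ℝ) * S := by
          apply mul_le_mul
          · simp [Nat.card_Icc]
          · exact Finset.sum_le_sum_of_subset_of_nonneg
              (Finset.Icc_subset_Icc_right hi.2) (fun _ _ _ => sq_nonneg _)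
          · exact Finset.sum_nonneg fun _ _ => sq_nonneg _
          · positivity
  calc ∑ i ∈ Finset.Icc 1 n, (a i) ^ 2
      ≤ ∑ i ∈ Finset.Icc 1 n, (i : ℝ) * S := Finset.sum_le_sum key
    _ = (n * (n + 1) / 2 : ℝ) * S := by
        rw [← Finset.sum_mul, gauss_aux]
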